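/- Consider a two-player game in which each player has strategy set {1,2}, with payoffs c_1(1,1)=a, c_1(1,2)=b, c_1(2,1)=c, c_1(2,2)=d and c_2(1,1)=e, c_2(1,2)=f, c_2(2,1)=g, c_2(2,2)=h, and with positive coset-depending weights w_1(1)=α_1, w_1(2)=β_1 (for player 1, depending on player 2's strategy) and w_2(1)=α_2, w_2(2)=β_2 (for player 2, depending on player 1's strategy). Then the game is a coset weighted potential game with respect to these weights if and only if (c−a)/α_1 + (e−f)/α_2 + (b−d)/β_1 + (h−g)/β_2 = 0. -/
import Mathlib


/-- **Proposition 3.1.** A two-player Boolean game with payoffs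
`c₁ = [[a,b],[c,d]]`, `c₂ = [[e,f],[g,h]]` and positive coset-depending weights
`w₁ = [α₁, β₁]` (for player 1, depending on player 2's strategy) and
`w₂ = [α₂, β₂]` (for player 2, depending on player 1's strategy) is a coset
weighted potential game with respect to these weights iff
`(c−a)/α₁ + (e−f)/α₂ + (b−d)/β₁ + (h−g)/β₂ = 0`. -/
theorem boolean_game_cwpg_iff (a b c d e f g h α₁ β₁ α₂ β₂ : ℝ)
    (hα₁ : 0 < α₁) (hβ₁ : 0 < β₁) (hα₂ : 0 < α₂) (hβ₂ : 0 < β₂)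
    (c₁ c₂ : Fin 2 → Fin 2 → ℝ) (w₁ w₂ : Fin 2 → ℝ)
    (hc₁ : c₁ = ![![a, b], ![c, d]]) (hc₂ : c₂ = ![![e, f], ![g, h]])
    (hw₁ : w₁ = ![α₁, β₁]) (hw₂ : w₂ = ![α₂, β₂]) :
    (∃ P : Fin 2 → Fin 2 → ℝ,
        (∀ (s₂ x y : Fin 2), c₁ x s₂ - c₁ y s₂ = w₁ s₂ * (P x s₂ - P y s₂)) ∧
        (∀ (s₁ x y : Fin 2), c₂ s₁ x - c₂ s₁ y = w₂ s₁ * (P s₁ x - P s₁ y))) ↔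
      (c - a) / α₁ + (e - f) / α₂ + (b - d) / β₁ + (h - g) / β₂ = 0 := by
  have hα₁' := hα₁.ne'
  have hβ₁' := hβ₁.ne'
  have hα₂' := hα₂.ne'
  have hβ₂' := hβ₂.ne'
  subst hc₁ hc₂ hw₁ hw₂
  constructor
  · rintro ⟨P, h1, h2⟩
    have e1 := h1 0 1 0
    have e2 := h1 1 0 1
    have e3 := h2 0 0 1
    have e4 := h2 1 1 0
    simp [Matrix.cons_val_zero, Matrix.cons_val_one] at e1 e2 e3 e4
    field_simp
    linear_combination α₂ * β₁ * β₂ * e1 + α₁ * α₂ * β₂ * e2 + α₁ * β₁ * β₂ * e3 + α₁ * α₂ * β₁ * e4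
  · intro hEq
    refine ⟨![![0, (f - e) / α₂], ![(c - a) / α₁, (d - b) / β₁ + (f - e) / α₂]], ?_, ?_⟩ <;>
      intro s x y <;> fin_cases s <;> fin_cases x <;> fin_cases y <;>
      simp <;> field_simp <;> field_simp at hEq <;> nlinarith [hEq]
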